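/- Let P be uniformly distributed on [−1/3, 1/3], and conditionally on P = p let X_1, …, X_m be i.i.d. ±1-valued random variables with mean p. Let f : {±1}^m → [−1/3, 1/3] satisfy E[(f(X_{1:m}) − P)²] ≤ ε for some ε ≤ 1/27. Then E[ ((1 − 9P²)/(9 − 9P²)) · (f(X_{1:m}) − P) · Σ_{i=1}^m (X_i − P) ] ≥ 1/27 − ε; in particular, when ε ≤ 1/54 this correlation is at least 1/54. -/

import Mathlib

/-!
Write `q_x(p) = ∏ᵢ (1 + xᵢ p)/2` for the likelihood of `x` and `g(p) = Σₓ q_x(p) f(x)` for the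
mean of the estimator. The score identity `(1 - p²) q_x'(p) = q_x(p) Σᵢ (xᵢ - p)` turns the inner
expectation into `(1/9 - p²) g'(p)`. This weight vanishes at `p = ±1/3`, so integrating by parts
leaves `∫ 2p g(p) dp`. Finally `2pg ≥ p² - (g - p)²` and, by Jensen, `(g - p)² ≤ E_p[(f(X) - p)²]`,
so the correlation is at least `(3/2) ∫ p² dp - ε = 1/27 - ε`.
-/

open Finset Real

noncomputable section

def pm1 (b : Bool) : ℝ := if b then 1 else -1

lemma pm1_sq (b : Bool) : pm1 b ^ 2 = 1 := by cases b <;> norm_num [pm1]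

lemma integral_sq_sub_sq_mul_deriv {g g' : ℝ → ℝ} {a : ℝ}
    (hg : ∀ p ∈ Set.uIcc (-a) a, HasDerivAt g (g' p) p)
    (hg' : IntervalIntegrable g' MeasureTheory.volume (-a) a) :
    ∫ p in -a..a, (a ^ 2 - p ^ 2) * g' p = ∫ p in -a..a, 2 * p * g p := by
  have hweight : ∀ p ∈ Set.uIcc (-a) a, HasDerivAt (fun p => a ^ 2 - p ^ 2) (-(2 * p)) p :=
    fun p _ => by simpa using (hasDerivAt_pow 2 p).const_sub (a ^ 2)
  rw [intervalIntegral.integral_mul_deriv_eq_deriv_mul hweight hg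
    (by apply Continuous.intervalIntegrable; fun_prop) hg']
  simp [intervalIntegral.integral_neg]

lemma integral_sq_sub_integral_sq_sub_le {g : ℝ → ℝ} (hg : Continuous g) {a b : ℝ} (hab : a ≤ b) :
    (∫ p in a..b, p ^ 2) - ∫ p in a..b, (g p - p) ^ 2 ≤ ∫ p in a..b, 2 * p * g p := by
  rw [← intervalIntegral.integral_sub (by apply Continuous.intervalIntegrable; fun_prop)
    (by apply Continuous.intervalIntegrable; fun_prop)]
  refine intervalIntegral.integral_mono_on hab (by apply Continuous.intervalIntegrable; fun_prop)
    (by apply Continuous.intervalIntegrable; fun_prop) fun p _ => ?_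
  nlinarith [sq_nonneg (g p)]

namespace Fingerprinting

variable {ι : Type*} [Fintype ι]

def likelihood (x : ι → Bool) (p : ℝ) : ℝ := ∏ i, (1 + pm1 (x i) * p) / 2

lemma continuous_likelihood (x : ι → Bool) : Continuous (likelihood x) := by
  unfold likelihood; fun_prop

lemma likelihood_nonneg (x : ι → Bool) {p : ℝ} (hp : p ∈ Set.Icc (-1) 1) :
    0 ≤ likelihood x p :=
  prod_nonneg fun i _ => by
    cases x i <;> simp only [pm1, if_true, Bool.false_eq_true, if_false] <;> linarith [hp.1, hp.2]

variable [DecidableEq ι]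

lemma sum_likelihood (p : ℝ) : ∑ x : ι → Bool, likelihood x p = 1 := by
  unfold likelihood
  rw [← Fintype.piFinset_univ, ← prod_univ_sum (fun _ => univ) fun _ b => (1 + pm1 b * p) / 2]
  refine prod_eq_one fun i _ => ?_
  simp only [Fintype.sum_bool, pm1, if_true, Bool.false_eq_true, if_false]
  ring

def likelihoodDeriv (x : ι → Bool) (p : ℝ) : ℝ :=
  ∑ i, (∏ j ∈ univ.erase i, (1 + pm1 (x j) * p) / 2) * (pm1 (x i) / 2)

lemma hasDerivAt_likelihood (x : ι → Bool) (p : ℝ) :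
    HasDerivAt (likelihood x) (likelihoodDeriv x p) p := by
  have hfactor : ∀ i ∈ (univ : Finset ι),
      HasDerivAt (fun p : ℝ => (1 + pm1 (x i) * p) / 2) (pm1 (x i) / 2) p := fun i _ => by
    simpa using (((hasDerivAt_id p).const_mul (pm1 (x i))).const_add 1).div_const 2
  unfold likelihood likelihoodDeriv
  simpa only [smul_eq_mul] using HasDerivAt.fun_finsetProd hfactor

lemma continuous_likelihoodDeriv (x : ι → Bool) : Continuous (likelihoodDeriv x) := by
  unfold likelihoodDeriv; fun_prop

lemma sum_likelihoodDeriv (p : ℝ) : ∑ x : ι → Bool, likelihoodDeriv x p = 0 :=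
  (HasDerivAt.fun_sum fun x _ => hasDerivAt_likelihood x p).unique <| by
    simpa only [sum_likelihood] using hasDerivAt_const p (1 : ℝ)

/-- Factorwise this is `(1 + b p)(b - p) = b (1 - p²)` for `b = ±1`. -/
lemma likelihood_mul_score (x : ι → Bool) (p : ℝ) :
    likelihood x p * ∑ i, (pm1 (x i) - p) = (1 - p ^ 2) * likelihoodDeriv x p := by
  rw [likelihood, likelihoodDeriv, mul_sum, mul_sum]
  refine sum_congr rfl fun i _ => ?_
  rw [← prod_erase_mul univ _ (mem_univ i)]
  linear_combination ((∏ j ∈ univ.erase i, (1 + pm1 (x j) * p) / 2) * p / 2) * pm1_sq (x i)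

variable (f : (ι → Bool) → ℝ)

def mean (p : ℝ) : ℝ := ∑ x, likelihood x p * f x

def meanDeriv (p : ℝ) : ℝ := ∑ x, likelihoodDeriv x p * f x

lemma continuous_mean : Continuous (mean f) :=
  continuous_finsetSum _ fun x _ => (continuous_likelihood x).mul continuous_const

lemma continuous_meanDeriv : Continuous (meanDeriv f) :=
  continuous_finsetSum _ fun x _ => (continuous_likelihoodDeriv x).mul continuous_const

lemma hasDerivAt_mean (p : ℝ) : HasDerivAt (mean f) (meanDeriv f p) p :=
  HasDerivAt.fun_sum fun x _ => (hasDerivAt_likelihood x p).mul_const (f x)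

lemma sum_likelihood_mul_correlation (c p : ℝ) :
    ∑ x, likelihood x p * (c * (f x - p) * ∑ i, (pm1 (x i) - p)) =
      c * (1 - p ^ 2) * meanDeriv f p := by
  have hterm : ∀ x : ι → Bool, likelihood x p * (c * (f x - p) * ∑ i, (pm1 (x i) - p)) =
      c * (1 - p ^ 2) * (likelihoodDeriv x p * f x - p * likelihoodDeriv x p) := fun x => by
    linear_combination c * (f x - p) * likelihood_mul_score x p
  rw [sum_congr rfl fun x _ => hterm x, ← mul_sum, sum_sub_distrib, ← mul_sum,
    sum_likelihoodDeriv, meanDeriv]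
  ring

lemma sq_mean_sub_le {p : ℝ} (hp : p ∈ Set.Icc (-1) 1) (c : ℝ) :
    (mean f p - c) ^ 2 ≤ ∑ x, likelihood x p * (f x - c) ^ 2 := by
  have hmean : mean f p - c = ∑ x, likelihood x p * (f x - c) := by
    simp only [mean, mul_sub, sum_sub_distrib, ← sum_mul, sum_likelihood, one_mul]
  have hq : ∀ x ∈ (univ : Finset (ι → Bool)), 0 ≤ likelihood x p :=
    fun x _ => likelihood_nonneg x hp
  have hcs := sum_sq_le_sum_mul_sum_of_sq_le_mul univ (r := fun x => likelihood x p * (f x - c)) hq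
    (fun x hx => mul_nonneg (hq x hx) (sq_nonneg (f x - c)))
    (fun x _ => le_of_eq (by ring))
  rwa [sum_likelihood, one_mul, ← hmean] at hcs

end Fingerprinting

open Fingerprinting

theorem accurate_estimators_correlate_with_empirical_sum_general (m : ℕ)
    (f : (Fin m → Bool) → ℝ)
    (ε : ℝ)
    (hacc : (3 / 2 : ℝ) *
        ∫ p in (-(1 / 3) : ℝ)..(1 / 3),
          ∑ x : Fin m → Bool,
            (∏ i, (1 + pm1 (x i) * p) / 2) * (f x - p) ^ 2 ≤ ε) :
    (3 / 2 : ℝ) *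
        ∫ p in (-(1 / 3) : ℝ)..(1 / 3),
          ∑ x : Fin m → Bool,
            (∏ i, (1 + pm1 (x i) * p) / 2) *
              ((1 - 9 * p ^ 2) / (9 - 9 * p ^ 2) * (f x - p) * (∑ i, (pm1 (x i) - p))) ≥
      1 / 27 - ε ∧
    (ε ≤ 1 / 54 →
      (3 / 2 : ℝ) *
          ∫ p in (-(1 / 3) : ℝ)..(1 / 3),
            ∑ x : Fin m → Bool,
              (∏ i, (1 + pm1 (x i) * p) / 2) *
                ((1 - 9 * p ^ 2) / (9 - 9 * p ^ 2) * (f x - p) * (∑ i, (pm1 (x i) - p))) ≥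
        1 / 54) := by
  rw [intervalIntegral.integral_congr (g := fun p => ((1 / 3) ^ 2 - p ^ 2) * meanDeriv f p)
      fun p hp => ?weight, integral_sq_sub_sq_mul_deriv (fun p _ => hasDerivAt_mean f p)
      ((continuous_meanDeriv f).intervalIntegrable _ _)]
  case weight =>
    have hp1 : 1 - p ^ 2 ≠ 0 := by
      rw [Set.uIcc_of_le (by norm_num)] at hp; nlinarith [hp.1, hp.2]
    change ∑ x, likelihood x p * (_ * (f x - p) * ∑ i, (pm1 (x i) - p)) = _
    rw [sum_likelihood_mul_correlation]
    field_simp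
    ring
  have hjensen : ∫ p in (-(1 / 3) : ℝ)..(1 / 3), (mean f p - p) ^ 2 ≤
      ∫ p in (-(1 / 3) : ℝ)..(1 / 3),
        ∑ x : Fin m → Bool, (∏ i, (1 + pm1 (x i) * p) / 2) * (f x - p) ^ 2 :=
    intervalIntegral.integral_mono_on (by norm_num)
      ((((continuous_mean f).sub continuous_id).pow 2).intervalIntegrable _ _)
      (by apply Continuous.intervalIntegrable; fun_prop)
      fun p hp => sq_mean_sub_le f ⟨by linarith [hp.1], by linarith [hp.2]⟩ p
  have hlower := integral_sq_sub_integral_sq_sub_le (continuous_mean f)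
    (by norm_num : -(1 / 3 : ℝ) ≤ 1 / 3)
  have hsq : ∫ p in (-(1 / 3) : ℝ)..(1 / 3), p ^ 2 = 2 / 81 := by norm_num [integral_pow]
  exact ⟨by linarith, fun _ => by linarith⟩

theorem accurate_estimators_correlate_with_empirical_sum (m : ℕ)
    (f : (Fin m → Bool) → ℝ)
    (hf : ∀ x, f x ∈ Set.Icc (-(1 / 3) : ℝ) (1 / 3))
    (ε : ℝ) (hε : ε ≤ 1 / 27)
    (hacc : (3 / 2 : ℝ) *
        ∫ p in (-(1 / 3) : ℝ)..(1 / 3),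
          ∑ x : Fin m → Bool,
            (∏ i, (1 + pm1 (x i) * p) / 2) * (f x - p) ^ 2 ≤ ε) :
    (3 / 2 : ℝ) *
        ∫ p in (-(1 / 3) : ℝ)..(1 / 3),
          ∑ x : Fin m → Bool,
            (∏ i, (1 + pm1 (x i) * p) / 2) *
              ((1 - 9 * p ^ 2) / (9 - 9 * p ^ 2) * (f x - p) * (∑ i, (pm1 (x i) - p))) ≥
      1 / 27 - ε ∧
    (ε ≤ 1 / 54 →
      (3 / 2 : ℝ) *
          ∫ p in (-(1 / 3) : ℝ)..(1 / 3),
            ∑ x : Fin m → Bool,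
              (∏ i, (1 + pm1 (x i) * p) / 2) *
                ((1 - 9 * p ^ 2) / (9 - 9 * p ^ 2) * (f x - p) * (∑ i, (pm1 (x i) - p))) ≥
        1 / 54) :=
  accurate_estimators_correlate_with_empirical_sum_general m f ε hacc
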